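/- arXiv:1201.4840 — 4 statements merged into one kernel-verified Lean document; each statement's English description precedes it below -/
import Mathlib

section
/- Let φ₁,…,φ_L be distinct real numbers, fix an index l, and set T = {π/(φ_l − φ_k) : 1 ≤ k ≤ L, k ≠ l}. For each subset Q ⊆ T let s(Q) = ∑_{q∈Q} q. Then for every k ∈ {1,…,L}, ∑_{Q⊆T} e^{i(φ_l − φ_k)s(Q)} = 2^{L−1} δ_{kl}, where δ_{kl} is the Kronecker delta. -/
open Finset

/-- For distinct phases `φ₁,…,φ_L`, a fixed index `l`, `T = {π/(φ_l − φ_k) : k ≠ l}` and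
`s(Q) = ∑_{q ∈ Q} q` for `Q ⊆ T`, one has
`∑_{Q ⊆ T} e^{i(φ_l − φ_k) s(Q)} = 2^{L−1} δ_{kl}` for every `k`. -/
theorem stmt4 (L : ℕ) (φ : Fin L → ℝ) (hφ : Function.Injective φ) (l k : Fin L) :
    ∑ Q ∈ (Finset.univ.erase l).powerset,
        Complex.exp (Complex.I * ((φ l - φ k : ℝ) : ℂ)
          * ((∑ q ∈ Q, Real.pi / (φ l - φ q) : ℝ) : ℂ))
      = (2 : ℂ) ^ (L - 1) * (if k = l then 1 else 0) := by
  have hcard : (Finset.univ.erase l).card = L - 1 := by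
    rw [card_erase_of_mem (mem_univ l), card_univ, Fintype.card_fin]
  by_cases hk : k = l
  · subst hk
    simp only [sub_self, Complex.ofReal_zero, mul_zero, zero_mul, Complex.exp_zero,
      if_pos rfl, mul_one]
    rw [Finset.sum_const, card_powerset, hcard]
    push_cast
    ring
  · rw [if_neg hk, mul_zero]
    have key : ∀ Q ∈ (Finset.univ.erase l).powerset,
        Complex.exp (Complex.I * ((φ l - φ k : ℝ) : ℂ)
          * ((∑ q ∈ Q, Real.pi / (φ l - φ q) : ℝ) : ℂ))
        = ∏ q ∈ Q, Complex.exp (Complex.I * ((φ l - φ k : ℝ) : ℂ)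
            * ((Real.pi / (φ l - φ q) : ℝ) : ℂ)) := by
      intro Q _
      rw [← Complex.exp_sum]
      congr 1
      push_cast
      rw [Finset.mul_sum]
    rw [Finset.sum_congr rfl key]
    have := Finset.prod_add
      (fun q => Complex.exp (Complex.I * ((φ l - φ k : ℝ) : ℂ)
            * ((Real.pi / (φ l - φ q) : ℝ) : ℂ)))
      (fun _ => (1 : ℂ)) (Finset.univ.erase l)
    simp only [Finset.prod_const_one, mul_one] at this
    rw [← this]
    apply Finset.prod_eq_zero (i := k) (by simp [hk])
    have hne : φ l - φ k ≠ 0 := sub_ne_zero.mpr (fun h => hk (hφ h).symm)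
    have : Complex.I * ((φ l - φ k : ℝ) : ℂ) * ((Real.pi / (φ l - φ k) : ℝ) : ℂ)
        = Complex.I * Real.pi := by
      have hne' : ((φ l : ℂ) - (φ k : ℂ)) ≠ 0 := by
        exact_mod_cast (Complex.ofReal_ne_zero.mpr hne)
      push_cast
      field_simp
    rw [this]
    rw [mul_comm, Complex.exp_mul_I]
    simp
end

section
/- Let V: (0,∞) → ℂ have generalized bounded variation: V = ∑_{l=1}^L β_l + W where each β_l has rotated bounded variation with phase φ_l (the φ_l distinct) and W ∈ L¹(0,∞). If moreover V ∈ L¹(0,∞) + L^p(0,∞) for some 1 ≤ p ≤ ∞, and each β_l is C¹ with (d/dx)(e^{iφ_l x}β_l(x)) ∈ L¹, then β_l ∈ L^p(0,∞) for every l. -/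
open MeasureTheory Set
open scoped ENNReal

lemma norm_le_of_bv {f : ℝ → ℂ} (h : BoundedVariationOn f (Ioi 0)) :
    ∃ M : ℝ, ∀ x ∈ Ioi (0:ℝ), ‖f x‖ ≤ M := by
  refine ⟨‖f 1‖ + (eVariationOn f (Ioi 0)).toReal, fun x hx => ?_⟩
  have h1 : (1:ℝ) ∈ Ioi (0:ℝ) := by norm_num
  have hd : dist (f x) (f 1) ≤ (eVariationOn f (Ioi 0)).toReal := by
    rw [dist_edist]
    exact ENNReal.toReal_mono h (eVariationOn.edist_le f hx h1)
  calc ‖f x‖ = ‖f 1 + (f x - f 1)‖ := by ring_nf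
    _ ≤ ‖f 1‖ + ‖f x - f 1‖ := norm_add_le _ _
    _ ≤ _ := by rw [← dist_eq_norm] at *; linarith

lemma memLp_of_memL1_of_bound {μ : Measure ℝ} {p : ℝ≥0∞} (hp : 1 ≤ p) (hptop : p ≠ ⊤)
    {f : ℝ → ℝ} (h1 : MemLp f 1 μ) {M : ℝ} (hM : ∀ᵐ x ∂μ, ‖f x‖ ≤ M) : MemLp f p μ := by
  set M' : ℝ := max M 1 with hM'
  have hM'1 : 1 ≤ M' := le_max_right _ _
  have hp0 : p ≠ 0 := by positivity
  refine ⟨h1.1, ?_⟩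
  rw [eLpNorm_eq_lintegral_rpow_enorm_toReal hp0 hptop]
  set r : ℝ := p.toReal with hr
  have hr1 : 1 ≤ r := by
    rw [hr]
    simpa using ENNReal.toReal_mono hptop hp
  set C : ℝ≥0∞ := ENNReal.ofReal M' ^ (r - 1) with hC
  have hCne : C ≠ ⊤ := by
    rw [hC]
    exact (ENNReal.rpow_lt_top_of_nonneg (by linarith) ENNReal.ofReal_ne_top).ne
  have key : ∀ᵐ x ∂μ, (‖f x‖₊ : ℝ≥0∞) ^ r ≤ C * ‖f x‖₊ := by
    filter_upwards [hM] with x hx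
    rcases eq_or_ne ((‖f x‖₊ : ℝ≥0∞)) 0 with h0 | h0
    · rw [h0, ENNReal.zero_rpow_of_pos (by linarith), mul_zero]
    · have hle : (‖f x‖₊ : ℝ≥0∞) ≤ ENNReal.ofReal M' := by
        rw [← enorm_eq_nnnorm, ← ofReal_norm]
        exact ENNReal.ofReal_le_ofReal (hx.trans (le_max_left _ _))
      calc (‖f x‖₊ : ℝ≥0∞) ^ r = (‖f x‖₊ : ℝ≥0∞) ^ (r - 1) * (‖f x‖₊ : ℝ≥0∞) ^ (1:ℝ) := by
            rw [← ENNReal.rpow_add _ _ h0 ENNReal.coe_ne_top]; ring_nf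
        _ ≤ C * ‖f x‖₊ := by
            rw [ENNReal.rpow_one]
            exact mul_le_mul_left (ENNReal.rpow_le_rpow hle (by linarith)) _
  have hfin : ∫⁻ x, (‖f x‖₊ : ℝ≥0∞) ∂μ < ⊤ := by
    have := h1.2
    rwa [eLpNorm_one_eq_lintegral_enorm] at this
  calc (∫⁻ x, (‖f x‖₊ : ℝ≥0∞) ^ r ∂μ) ^ (1 / r)
      ≤ (∫⁻ x, C * ‖f x‖₊ ∂μ) ^ (1 / r) := by
        exact ENNReal.rpow_le_rpow (lintegral_mono_ae key) (by positivity)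
    _ < ⊤ := by
        rw [lintegral_const_mul' _ _ hCne]
        exact ENNReal.rpow_lt_top_of_nonneg (by positivity)
          (ENNReal.mul_lt_top hCne.lt_top hfin).ne


lemma memLp_translate {f : ℝ → ℂ} {q : ℝ≥0∞} {s : ℝ} (hs : 0 ≤ s)
    (hf : MemLp f q (volume.restrict (Ioi 0))) :
    MemLp (fun x => f (x + s)) q (volume.restrict (Ioi 0)) := by
  have hpre : (fun x : ℝ => x + s) ⁻¹' (Ioi s) = Ioi 0 := by
    ext x; simp [mem_Ioi]
  have hmp : MeasurePreserving (fun x : ℝ => x + s)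
      (volume.restrict (Ioi 0)) (volume.restrict (Ioi s)) := by
    have := (measurePreserving_add_right volume s).restrict_preimage
      (measurableSet_Ioi (a := s))
    rwa [hpre] at this
  have hf' : MemLp f q (volume.restrict (Ioi s)) :=
    hf.mono_measure (Measure.restrict_mono (Ioi_subset_Ioi hs) le_rfl)
  exact hf'.comp_measurePreserving hmp

lemma integrableOn_translate {f : ℝ → ℂ} {s : ℝ} (hs : 0 ≤ s)
    (hf : IntegrableOn f (Ioi 0)) :
    IntegrableOn (fun x => f (x + s)) (Ioi 0) := by
  have h1 : MemLp f 1 (volume.restrict (Ioi 0)) := memLp_one_iff_integrable.2 hf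
  exact memLp_one_iff_integrable.1 (memLp_translate hs h1)

lemma memLp_of_decomp {μ : Measure ℝ} {p : ℝ≥0∞} (hp : 1 ≤ p) (hptop : p ≠ ⊤)
    {f g h : ℝ → ℂ} (hg : MemLp g p μ) (hh : Integrable h μ)
    (heq : ∀ᵐ x ∂μ, f x = g x + h x) (hfm : AEStronglyMeasurable f μ)
    {M : ℝ} (hM : ∀ᵐ x ∂μ, ‖f x‖ ≤ M) : MemLp f p μ := by
  set M' : ℝ := max M 0 with hM'def
  have hmin1 : MemLp (fun x => min M' ‖h x‖) 1 μ := by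
    rw [memLp_one_iff_integrable]
    refine Integrable.mono hh.norm ?_ ?_
    · exact (aemeasurable_const.min hh.aestronglyMeasurable.norm.aemeasurable).aestronglyMeasurable
    · filter_upwards with x
      have h0 : 0 ≤ min M' ‖h x‖ := by positivity
      rw [Real.norm_eq_abs, Real.norm_eq_abs, abs_of_nonneg h0, abs_of_nonneg (norm_nonneg _)]
      exact min_le_right _ _
  have hminp : MemLp (fun x => min M' ‖h x‖) p μ := by
    refine memLp_of_memL1_of_bound hp hptop hmin1 (M := M') ?_
    filter_upwards with x
    have h0 : 0 ≤ min M' ‖h x‖ := by positivity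
    rw [Real.norm_eq_abs, abs_of_nonneg h0]
    exact min_le_left _ _
  have hq : MemLp (fun x => ‖g x‖ + min M' ‖h x‖) p μ := hg.norm.add hminp
  refine hq.of_le hfm ?_
  filter_upwards [heq, hM] with x hx1 hx2
  have h0 : 0 ≤ min M' ‖h x‖ := by positivity
  rw [Real.norm_eq_abs, abs_of_nonneg (by positivity)]
  rcases le_or_gt ‖h x‖ M' with hc | hc
  · rw [min_eq_right hc, hx1]
    exact norm_add_le _ _
  · rw [min_eq_left hc.le]
    have : ‖f x‖ ≤ M' := hx2.trans (le_max_left _ _)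
    nlinarith [norm_nonneg (g x)]


lemma integrableOn_shift_sub {γ d : ℝ → ℂ} {s : ℝ} (hs : 0 ≤ s)
    (hderiv : ∀ x ∈ Ioi (0:ℝ), HasDerivAt γ (d x) x)
    (hcont : ContinuousOn d (Ioi 0)) (hint : IntegrableOn d (Ioi 0)) :
    IntegrableOn (fun x => γ (x + s) - γ x) (Ioi 0) := by
  classical
  have hγc : ContinuousOn γ (Ioi 0) := fun x hx =>
    ((hderiv x hx).continuousAt).continuousWithinAt
  have hγcs : ContinuousOn (fun x => γ (x + s)) (Ioi 0) := by
    refine hγc.comp ((continuous_id.add continuous_const).continuousOn) (fun x hx => ?_)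
    simp only [mem_Ioi] at *
    linarith
  have hmeas : AEStronglyMeasurable (fun x => γ (x + s) - γ x)
      (volume.restrict (Ioi 0)) :=
    (hγcs.sub hγc).aestronglyMeasurable measurableSet_Ioi
  set G : ℝ → ℝ≥0∞ := (Ioi 0).indicator (fun u => (‖d u‖₊ : ℝ≥0∞)) with hGdef
  have hGmeas : Measurable G := by
    rw [hGdef, ← Set.piecewise_eq_indicator]
    exact ContinuousOn.measurable_piecewise
      (ENNReal.continuous_coe.comp_continuousOn hcont.nnnorm)
      continuousOn_const measurableSet_Ioi
  set F : ℝ → ℝ → ℝ≥0∞ := fun x u => (Ioc x (x + s)).indicator G u with hFdef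
  have hFmeas : Measurable (Function.uncurry F) := by
    have hE : MeasurableSet {q : ℝ × ℝ | q.1 < q.2 ∧ q.2 ≤ q.1 + s} :=
      (measurableSet_lt measurable_fst measurable_snd).inter
        (measurableSet_le measurable_snd (measurable_fst.add_const s))
    have : Function.uncurry F =
        ({q : ℝ × ℝ | q.1 < q.2 ∧ q.2 ≤ q.1 + s}).indicator (fun q => G q.2) := by
      funext q
      simp only [Function.uncurry, hFdef, indicator, mem_Ioc, mem_setOf_eq]
    rw [this]
    exact (hGmeas.comp measurable_snd).indicator hE
  have hGfin : ∫⁻ u, G u < ⊤ := by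
    rw [hGdef, lintegral_indicator measurableSet_Ioi]
    exact hint.2
  have hswap : ∫⁻ x, ∫⁻ u, F x u = ∫⁻ u, ∫⁻ x, F x u :=
    lintegral_lintegral_swap hFmeas.aemeasurable
  have hinner : ∀ u : ℝ, ∫⁻ x, F x u = G u * ENNReal.ofReal s := by
    intro u
    have : (fun x => F x u) = (Ico (u - s) u).indicator (fun _ => G u) := by
      funext x
      simp only [hFdef, indicator, mem_Ioc, mem_Ico]
      by_cases h1 : x < u ∧ u ≤ x + s
      · rw [if_pos h1, if_pos ⟨by linarith [h1.2], h1.1⟩]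
      · rw [if_neg h1, if_neg]
        intro h2
        exact h1 ⟨h2.2, by linarith [h2.1]⟩
    rw [this, lintegral_indicator measurableSet_Ico, setLIntegral_const,
      Real.volume_Ico, sub_sub_cancel]
  have htotal : ∫⁻ x, ∫⁻ u, F x u < ⊤ := by
    rw [hswap]
    calc ∫⁻ u, ∫⁻ x, F x u = ∫⁻ u, G u * ENNReal.ofReal s := by
          exact lintegral_congr hinner
      _ = (∫⁻ u, G u) * ENNReal.ofReal s :=
          lintegral_mul_const' _ _ ENNReal.ofReal_ne_top
      _ < ⊤ := ENNReal.mul_lt_top hGfin ENNReal.ofReal_lt_top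
  refine ⟨hmeas, ?_⟩
  rw [hasFiniteIntegral_def]
  have hbound : ∀ x ∈ Ioi (0:ℝ), (‖γ (x + s) - γ x‖₊ : ℝ≥0∞) ≤ ∫⁻ u, F x u := by
    intro x hx
    rw [mem_Ioi] at hx
    have hxs : x ≤ x + s := by linarith
    have hss : Set.uIcc x (x + s) ⊆ Ioi 0 := by
      rw [Set.uIcc_of_le hxs]
      intro t ht
      exact lt_of_lt_of_le hx ht.1
    have hIocss : Ioc x (x + s) ⊆ Ioi 0 := fun t ht => lt_trans hx ht.1
    have hII : IntervalIntegrable d volume x (x + s) := by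
      rw [intervalIntegrable_iff]
      exact hint.mono_set (by rw [Set.uIoc_of_le hxs]; exact hIocss)
    have hftc : ∫ u in x..(x + s), d u = γ (x + s) - γ x :=
      intervalIntegral.integral_eq_sub_of_hasDerivAt
        (fun t ht => hderiv t (hss ht)) hII
    have hnormle : ‖γ (x + s) - γ x‖ ≤ ∫ u in Ioc x (x + s), ‖d u‖ := by
      rw [← hftc]
      calc ‖∫ u in x..(x + s), d u‖ ≤ ∫ u in x..(x + s), ‖d u‖ :=
            intervalIntegral.norm_integral_le_integral_norm hxs
        _ = ∫ u in Ioc x (x + s), ‖d u‖ := intervalIntegral.integral_of_le hxs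
    have hdint : IntegrableOn d (Ioc x (x + s)) := hint.mono_set hIocss
    calc (‖γ (x + s) - γ x‖₊ : ℝ≥0∞) = ENNReal.ofReal ‖γ (x + s) - γ x‖ :=
          (ofReal_norm _).symm
      _ ≤ ENNReal.ofReal (∫ u in Ioc x (x + s), ‖d u‖) :=
          ENNReal.ofReal_le_ofReal hnormle
      _ = ∫⁻ u in Ioc x (x + s), (‖d u‖₊ : ℝ≥0∞) :=
          ofReal_integral_norm_eq_lintegral_enorm hdint
      _ = ∫⁻ u, (Ioc x (x + s)).indicator (fun u => (‖d u‖₊ : ℝ≥0∞)) u :=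
          (lintegral_indicator measurableSet_Ioc _).symm
      _ = ∫⁻ u, F x u := by
          refine lintegral_congr (fun u => ?_)
          simp only [hFdef, indicator]
          by_cases hu : u ∈ Ioc x (x + s)
          · rw [if_pos hu, if_pos hu, hGdef, indicator_of_mem (hIocss hu)]
          · rw [if_neg hu, if_neg hu]
  calc ∫⁻ x in Ioi 0, (‖γ (x + s) - γ x‖₊ : ℝ≥0∞)
      ≤ ∫⁻ x in Ioi 0, ∫⁻ u, F x u :=
        lintegral_mono_ae ((ae_restrict_iff' measurableSet_Ioi).2
          (Filter.Eventually.of_forall hbound))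
    _ ≤ ∫⁻ x, ∫⁻ u, F x u := lintegral_mono' Measure.restrict_le_self le_rfl
    _ < ⊤ := htotal

lemma norm_exp_I_mul_real (r : ℝ) : ‖Complex.exp (Complex.I * r)‖ = 1 := by
  rw [Complex.norm_exp]
  simp

lemma norm_exp_neg_I_mul_real (r : ℝ) : ‖Complex.exp (-(Complex.I * r))‖ = 1 := by
  rw [Complex.norm_exp]
  simp


/-- A function `β : (0,∞) → ℂ` has rotated bounded variation with phase `φ` if
`x ↦ e^{iφx} β(x)` has bounded variation on `(0,∞)`. -/
def RotatedBV (φ : ℝ) (β : ℝ → ℂ) : Prop :=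
  BoundedVariationOn (fun x : ℝ => Complex.exp (Complex.I * (φ * x : ℝ)) * β x) (Set.Ioi 0)

/-- If `V = ∑_{l} β_l + W` has generalized bounded variation (distinct phases `φ_l`,
`W ∈ L¹`, each `β_l` of rotated bounded variation, `C¹` with
`(d/dx)(e^{iφ_l x} β_l) ∈ L¹`), and `V ∈ L¹ + L^p` for some `1 ≤ p ≤ ∞`,
then each `β_l ∈ L^p(0,∞)`. -/
theorem stmt6 (L : ℕ) (φ : Fin L → ℝ) (hφ : Function.Injective φ)
    (β : Fin L → ℝ → ℂ) (W V : ℝ → ℂ)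
    (hrbv : ∀ l, RotatedBV (φ l) (β l))
    (hC1 : ∀ l, ∃ d : ℝ → ℂ,
      (∀ x ∈ Ioi (0:ℝ),
        HasDerivAt (fun t : ℝ => Complex.exp (Complex.I * (φ l * t : ℝ)) * β l t) (d x) x) ∧
      ContinuousOn d (Ioi 0) ∧ IntegrableOn d (Ioi 0))
    (hW : IntegrableOn W (Ioi 0))
    (hdecomp : ∀ x ∈ Ioi (0:ℝ), V x = (∑ l, β l x) + W x)
    (p : ℝ≥0∞) (hp : 1 ≤ p)
    (hV : ∃ V₁ Vp : ℝ → ℂ, (∀ x, V x = V₁ x + Vp x) ∧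
      MemLp V₁ 1 (volume.restrict (Ioi 0)) ∧ MemLp Vp p (volume.restrict (Ioi 0))) :
    ∀ l, MemLp (β l) p (volume.restrict (Ioi 0)) := by
  classical
  intro l
  choose d hd hdc hdi using hC1
  set γ : Fin L → ℝ → ℂ :=
    fun k x => Complex.exp (Complex.I * (φ k * x : ℝ)) * β k x with hγ
  have hγd : ∀ k, ∀ x ∈ Ioi (0:ℝ), HasDerivAt (γ k) (d k x) x := fun k => hd k
  have hγcont : ∀ k, ContinuousOn (γ k) (Ioi 0) := fun k x hx =>
    ((hγd k x hx).continuousAt).continuousWithinAt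
  have hβeq : ∀ k, ∀ x : ℝ,
      β k x = Complex.exp (-(Complex.I * (φ k * x : ℝ))) * γ k x := by
    intro k x
    simp only [hγ]
    rw [← mul_assoc, ← Complex.exp_add, neg_add_cancel, Complex.exp_zero, one_mul]
  have hβcont : ∀ k, ContinuousOn (β k) (Ioi 0) := by
    intro k
    have h2 : Continuous (fun x : ℝ => Complex.exp (-(Complex.I * (φ k * x : ℝ)))) := by
      fun_prop
    exact (h2.continuousOn.mul (hγcont k)).congr (fun x _ => hβeq k x)
  have hβbdd : ∀ k, ∃ M : ℝ, ∀ x ∈ Ioi (0:ℝ), ‖β k x‖ ≤ M := by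
    intro k
    obtain ⟨M, hM⟩ := norm_le_of_bv (hrbv k)
    refine ⟨M, fun x hx => ?_⟩
    have h1 := hM x hx
    calc ‖β k x‖ = ‖Complex.exp (-(Complex.I * (φ k * x : ℝ)))‖ * ‖γ k x‖ := by
          rw [← norm_mul, ← hβeq k x]
      _ = ‖γ k x‖ := by rw [norm_exp_neg_I_mul_real, one_mul]
      _ ≤ M := h1
  obtain ⟨M, hMbd⟩ := hβbdd l
  have hβmeas : AEStronglyMeasurable (β l) (volume.restrict (Ioi 0)) :=
    (hβcont l).aestronglyMeasurable measurableSet_Ioi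
  have hβae : ∀ᵐ x ∂(volume.restrict (Ioi (0:ℝ))), ‖β l x‖ ≤ M :=
    (ae_restrict_iff' measurableSet_Ioi).2 (Filter.Eventually.of_forall hMbd)
  rcases eq_or_ne p ⊤ with hptop | hptop
  · rw [hptop]
    exact memLp_top_of_bound hβmeas M hβae
  -- main case
  obtain ⟨V₁, Vp, hVeq, hV1, hVp⟩ := hV
  have hV1i : IntegrableOn V₁ (Ioi 0) := memLp_one_iff_integrable.1 hV1
  set t : Fin L → ℝ := fun m => Real.pi / |φ l - φ m| with ht
  have htnn : ∀ m, 0 ≤ t m := fun m => div_nonneg Real.pi_pos.le (abs_nonneg _)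
  set S : Finset (Fin L) := Finset.univ.erase l with hS
  set sQ : Finset (Fin L) → ℝ := fun Q => ∑ m ∈ Q, t m with hsQ
  have hsQnn : ∀ Q, 0 ≤ sQ Q := fun Q => Finset.sum_nonneg (fun m _ => htnn m)
  set c : Finset (Fin L) → ℂ := fun Q => Complex.exp (Complex.I * (φ l * sQ Q : ℝ)) with hc
  -- error terms
  set err : Fin L → ℝ → ℝ → ℂ := fun k s x =>
    Complex.exp (-(Complex.I * (φ k * (x + s) : ℝ))) * (γ k (x + s) - γ k x) with herr
  have herrInt : ∀ k, ∀ s : ℝ, 0 ≤ s → IntegrableOn (err k s) (Ioi 0) := by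
    intro k s hs
    have hdiff := integrableOn_shift_sub hs (hγd k) (hdc k) (hdi k)
    have hexpm : AEStronglyMeasurable
        (fun x : ℝ => Complex.exp (-(Complex.I * (φ k * (x + s) : ℝ))))
        (volume.restrict (Ioi 0)) := by
      apply Continuous.aestronglyMeasurable
      fun_prop
    refine ⟨hexpm.mul hdiff.1, ?_⟩
    rw [hasFiniteIntegral_def]
    have hnn : ∀ x : ℝ, (‖err k s x‖₊ : ℝ≥0∞) = (‖γ k (x + s) - γ k x‖₊ : ℝ≥0∞) := by
      intro x
      have hx : ‖err k s x‖ = ‖γ k (x + s) - γ k x‖ := by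
        simp only [herr, norm_mul, norm_exp_neg_I_mul_real, one_mul]
      rw [← enorm_eq_nnnorm, ← enorm_eq_nnnorm, ← ofReal_norm, ← ofReal_norm, hx]
    simp only [enorm_eq_nnnorm, hnn]
    exact hdiff.2
  -- shift identity
  have hshift : ∀ k, ∀ s x : ℝ,
      β k (x + s) = Complex.exp (-(Complex.I * (φ k * s : ℝ))) * β k x + err k s x := by
    intro k s x
    simp only [herr, hγ]
    rw [mul_sub, ← mul_assoc, ← mul_assoc, ← Complex.exp_add, ← Complex.exp_add]
    have e1 : -(Complex.I * ((φ k * (x + s) : ℝ) : ℂ)) + Complex.I * ((φ k * (x + s) : ℝ) : ℂ)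
        = 0 := by ring
    have e2 : -(Complex.I * ((φ k * (x + s) : ℝ) : ℂ)) + Complex.I * ((φ k * x : ℝ) : ℂ)
        = -(Complex.I * ((φ k * s : ℝ) : ℂ)) := by push_cast; ring
    rw [e1, e2, Complex.exp_zero, one_mul]
    ring
  -- the combined function and its decomposition
  set F : ℝ → ℂ := fun x => ∑ Q ∈ S.powerset, c Q * V (x + sQ Q) with hF
  set g0 : ℝ → ℂ := fun x => ∑ Q ∈ S.powerset, c Q * Vp (x + sQ Q) with hg0
  set h0 : ℝ → ℂ := fun x => ∑ Q ∈ S.powerset, c Q * V₁ (x + sQ Q) with hh0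
  have hFeq : ∀ x, F x = g0 x + h0 x := by
    intro x
    simp only [hF, hg0, hh0]
    rw [← Finset.sum_add_distrib]
    refine Finset.sum_congr rfl (fun Q _ => ?_)
    rw [hVeq (x + sQ Q)]
    ring
  have hg0p : MemLp g0 p (volume.restrict (Ioi 0)) := by
    refine memLp_finset_sum _ (fun Q _ => ?_)
    exact (memLp_translate (hsQnn Q) hVp).const_mul (c Q)
  have hh0i : Integrable h0 (volume.restrict (Ioi 0)) := by
    refine integrable_finset_sum _ (fun Q _ => ?_)
    exact (integrableOn_translate (hsQnn Q) hV1i).const_mul (c Q)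
  set R : ℝ → ℂ := fun x =>
    ∑ Q ∈ S.powerset, c Q * ((∑ k, err k (sQ Q) x) + W (x + sQ Q)) with hR
  have hRi : Integrable R (volume.restrict (Ioi 0)) := by
    refine integrable_finset_sum _ (fun Q _ => ?_)
    refine Integrable.const_mul ?_ (c Q)
    exact (integrable_finset_sum _ (fun k _ => herrInt k _ (hsQnn Q))).add
      (integrableOn_translate (hsQnn Q) hW)
  -- coefficient computation
  have hcard : S.card = L - 1 := by
    rw [hS, Finset.card_erase_of_mem (Finset.mem_univ l), Finset.card_univ, Fintype.card_fin]
  have hcoef : ∀ k : Fin L,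
      ∑ Q ∈ S.powerset, Complex.exp (Complex.I * ((φ l - φ k) * sQ Q : ℝ))
        = if k = l then (2:ℂ) ^ (L - 1) else 0 := by
    intro k
    have hexp : ∀ Q ∈ S.powerset,
        Complex.exp (Complex.I * ((φ l - φ k) * sQ Q : ℝ))
          = ∏ m ∈ Q, Complex.exp (Complex.I * ((φ l - φ k) * t m : ℝ)) := by
      intro Q hQ
      rw [← Complex.exp_sum]
      congr 1
      simp only [hsQ]
      push_cast
      simp only [Finset.mul_sum]
    rw [Finset.sum_congr rfl hexp]
    have hps : ∑ Q ∈ S.powerset, ∏ m ∈ Q, Complex.exp (Complex.I * ((φ l - φ k) * t m : ℝ))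
        = ∏ m ∈ S, (Complex.exp (Complex.I * ((φ l - φ k) * t m : ℝ)) + 1) := by
      rw [Finset.prod_add]
      refine Finset.sum_congr rfl (fun Q hQ => ?_)
      rw [Finset.prod_const_one, mul_one]
    rw [hps]
    by_cases hkl : k = l
    · rw [if_pos hkl, hkl]
      have : ∀ m ∈ S, Complex.exp (Complex.I * ((φ l - φ l) * t m : ℝ)) + 1 = 2 := by
        intro m _
        rw [sub_self, zero_mul]
        norm_num
      rw [Finset.prod_congr rfl this, Finset.prod_const, hcard]
    · rw [if_neg hkl]
      have hkS : k ∈ S := by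
        rw [hS, Finset.mem_erase]
        exact ⟨hkl, Finset.mem_univ k⟩
      refine Finset.prod_eq_zero hkS ?_
      have ha : φ l - φ k ≠ 0 := sub_ne_zero.2 (fun h => hkl (hφ h).symm)
      have hexpval : Complex.exp (Complex.I * ((φ l - φ k) * t k : ℝ)) = -1 := by
        simp only [ht]
        rcases lt_or_gt_of_ne ha with hlt | hgt
        · have habs : |φ l - φ k| = -(φ l - φ k) := abs_of_neg hlt
          have : (φ l - φ k) * (Real.pi / |φ l - φ k|) = -Real.pi := by
            rw [habs, div_neg, mul_neg, mul_comm, div_mul_cancel₀ _ ha]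
          rw [this]
          push_cast
          rw [show Complex.I * (-(Real.pi:ℂ)) = -((Real.pi:ℂ) * Complex.I) by ring,
            Complex.exp_neg, Complex.exp_pi_mul_I]
          norm_num
        · have habs : |φ l - φ k| = φ l - φ k := abs_of_pos hgt
          have : (φ l - φ k) * (Real.pi / |φ l - φ k|) = Real.pi := by
            rw [habs, mul_comm, div_mul_cancel₀ _ ha]
          rw [this]
          rw [show Complex.I * ((Real.pi:ℝ):ℂ) = (Real.pi:ℂ) * Complex.I by ring,
            Complex.exp_pi_mul_I]
      rw [hexpval]
      ring
  -- key identity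
  have hkey : ∀ x ∈ Ioi (0:ℝ), F x = (2:ℂ) ^ (L - 1) * β l x + R x := by
    intro x hx
    have hx0 : (0:ℝ) < x := hx
    have hVx : ∀ Q ∈ S.powerset, V (x + sQ Q)
        = (∑ k, β k (x + sQ Q)) + W (x + sQ Q) := by
      intro Q _
      exact hdecomp (x + sQ Q) (by simp only [mem_Ioi]; linarith [hsQnn Q])
    have step1 : F x = ∑ Q ∈ S.powerset,
        ((∑ k, Complex.exp (Complex.I * ((φ l - φ k) * sQ Q : ℝ)) * β k x)
          + c Q * ((∑ k, err k (sQ Q) x) + W (x + sQ Q))) := by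
      simp only [hF]
      refine Finset.sum_congr rfl (fun Q hQ => ?_)
      have hcQ : ∀ k : Fin L, c Q * (Complex.exp (-(Complex.I * (φ k * sQ Q : ℝ))) * β k x)
          = Complex.exp (Complex.I * ((φ l - φ k) * sQ Q : ℝ)) * β k x := by
        intro k
        simp only [hc]
        rw [← mul_assoc, ← Complex.exp_add]
        congr 2
        push_cast
        ring
      have hsh : ∀ k : Fin L, β k (x + sQ Q)
          = Complex.exp (-(Complex.I * (φ k * sQ Q : ℝ))) * β k x + err k (sQ Q) x :=
        fun k => hshift k (sQ Q) x
      rw [hVx Q hQ, Finset.sum_congr rfl (fun k _ => hsh k), Finset.sum_add_distrib]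
      rw [show ∀ X Y w : ℂ, c Q * (X + Y + w) = c Q * X + c Q * (Y + w) from
        fun X Y w => by ring]
      rw [Finset.mul_sum]
      rw [Finset.sum_congr rfl (fun k _ => hcQ k)]
    rw [step1, Finset.sum_add_distrib]
    simp only [hR]
    congr 1
    rw [Finset.sum_comm]
    calc ∑ k : Fin L, ∑ Q ∈ S.powerset,
          Complex.exp (Complex.I * ((φ l - φ k) * sQ Q : ℝ)) * β k x
        = ∑ k : Fin L, (if k = l then (2:ℂ) ^ (L - 1) else 0) * β k x := by
          refine Finset.sum_congr rfl (fun k _ => ?_)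
          rw [← Finset.sum_mul, hcoef k]
      _ = (2:ℂ) ^ (L - 1) * β l x := by
          rw [Finset.sum_eq_single l (fun b _ hb => by rw [if_neg hb, zero_mul])
            (fun h => absurd (Finset.mem_univ l) h), if_pos rfl]
  -- final extraction
  have h2ne : ((2:ℂ) ^ (L - 1)) ≠ 0 := by
    apply pow_ne_zero
    norm_num
  refine memLp_of_decomp hp hptop
    (g := fun x => ((2:ℂ) ^ (L - 1))⁻¹ * g0 x)
    (h := fun x => ((2:ℂ) ^ (L - 1))⁻¹ * (h0 x - R x))
    (hg0p.const_mul _) ((hh0i.sub hRi).const_mul _) ?_ hβmeas hβae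
  refine (ae_restrict_iff' measurableSet_Ioi).2 (Filter.Eventually.of_forall (fun x hx => ?_))
  have h1 := hkey x hx
  have h2 := hFeq x
  have h3 : (2:ℂ) ^ (L - 1) * β l x = g0 x + h0 x - R x := by
    linear_combination h2 - h1
  have h4 : β l x = ((2:ℂ) ^ (L - 1))⁻¹ * ((2:ℂ) ^ (L - 1) * β l x) := by
    field_simp
  rw [h4, h3]
  ring
end

section
/- With F_{I,K} defined by the recurrences F_{0,0}=G_{0,0}=0, F_{1,0}=F_{1,1}=1, G_{I,K}(η;{φ_i}_{i=1}^I) = (K/(Kη − ∑φ_i))F_{I,K}(η;{φ_i}), F_{I,K} = Ξ_{I,K} + ∑_{a=−1}^{1} Ω_a ⊙ G_{I−1,K+a}: if φ₁ + ⋯ + φ_I = 0, then F_{I,0}(η; φ₁,…,φ_I) = F_{I,0}(η; −φ₁,…,−φ_I) (equality of rational functions in η at all points where both sides are finite). -/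
open Finset

/-- The symmetric product `(p ⊙ q)(η; φ₁,…,φ_{m+n}) = (1/(m+n)!) ∑_{σ ∈ S_{m+n}}
p(η; φ_{σ(1)},…,φ_{σ(m)}) q(η; φ_{σ(m+1)},…,φ_{σ(m+n)})`. -/
noncomputable def symProd (m n : ℕ) (p : ℝ → (Fin m → ℝ) → ℝ) (q : ℝ → (Fin n → ℝ) → ℝ) :
    ℝ → (Fin (m + n) → ℝ) → ℝ :=
  fun η φ => ((Nat.factorial (m + n) : ℝ))⁻¹ *
    ∑ σ : Equiv.Perm (Fin (m + n)),
      p η (fun i => φ (σ (Fin.castAdd n i))) * q η (fun j => φ (σ (Fin.natAdd m j)))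

/-- The functions `F_{I,K}`: `F_{0,K} = 0`, `F_{1,K} = 1` for `K ≤ 1` (and `0` out of
range), and for `I ≥ 2`,
`F_{I,K} = ∑_{a=−1}^{1} Ω_a ⊙ G_{I−1,K+a}` where `G_{I,K} = (K/(Kη − ∑φ_i)) F_{I,K}`,
`Ω₀ = 2`, `Ω_{±1} = 1` (the symmetric product with the constant `Ω_a` regarded as a
function of one phase variable). -/
noncomputable def Fk : (I : ℕ) → ℕ → ℝ → (Fin I → ℝ) → ℝ
  | 0, _, _, _ => 0
  | 1, K, _, _ => if K ≤ 1 then 1 else 0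
  | (I + 2), K, η, φ =>
      symProd (I + 1) 1
        (fun η' ψ => ((K - 1 : ℕ) : ℝ) / (((K - 1 : ℕ) : ℝ) * η' - ∑ i, ψ i)
          * Fk (I + 1) (K - 1) η' ψ) (fun _ _ => 1) η φ
      + 2 * symProd (I + 1) 1
        (fun η' ψ => (K : ℝ) / ((K : ℝ) * η' - ∑ i, ψ i)
          * Fk (I + 1) K η' ψ) (fun _ _ => 1) η φ
      + symProd (I + 1) 1
        (fun η' ψ => ((K + 1 : ℕ) : ℝ) / (((K + 1 : ℕ) : ℝ) * η' - ∑ i, ψ i)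
          * Fk (I + 1) (K + 1) η' ψ) (fun _ _ => 1) η φ

/-- `G_{I,K}(η; φ) = (K/(Kη − ∑_i φ_i)) F_{I,K}(η; φ)`. -/
noncomputable def Gk (I K : ℕ) (η : ℝ) (φ : Fin I → ℝ) : ℝ :=
  (K : ℝ) / ((K : ℝ) * η - ∑ i, φ i) * Fk I K η φ



noncomputable def cfn (η : ℝ) (m : ℕ) (S : ℝ) : ℝ := (m : ℝ) / ((m : ℝ) * η - S)

noncomputable def wt (a b : ℕ) : ℝ := if a = b then 2 else if a = b + 1 ∨ b = a + 1 then 1 else 0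

noncomputable def bwt (a b : ℕ) : ℝ := if a = b ∨ a = b + 1 ∨ b = a + 1 then 1 else 0

noncomputable def psum (I : ℕ) (φ : Fin I → ℝ) (J : ℕ) : ℝ :=
  ∑ i : Fin I, if (i : ℕ) < J then φ i else 0

noncomputable def termP (I K : ℕ) (k : Fin (I+1) → ℕ) : ℝ :=
  (if k 0 = 0 then 1 else 0) * (if k (Fin.last I) = K then 1 else 0)

noncomputable def cprod (I : ℕ) (η : ℝ) (φ : Fin I → ℝ) (k : Fin (I+1) → ℕ) : ℝ :=
  ∏ J : Fin (I+1), if 0 < (J : ℕ) ∧ (J : ℕ) < I then cfn η (k J) (psum I φ (J : ℕ)) else 1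

noncomputable def stepsW (I : ℕ) (k : Fin (I+1) → ℕ) : ℝ :=
  ∏ J : Fin I, (if (J : ℕ) = 0 then bwt else wt) (k J.castSucc) (k J.succ)

noncomputable def stepsS (I : ℕ) (k : Fin (I+1) → ℕ) : ℝ :=
  ∏ J : Fin I, wt (k J.castSucc) (k J.succ)

noncomputable def termW (I K : ℕ) (η : ℝ) (φ : Fin I → ℝ) (k : Fin (I+1) → ℕ) : ℝ :=
  termP I K k * stepsW I k * cprod I η φ k

noncomputable def termS (I K : ℕ) (η : ℝ) (φ : Fin I → ℝ) (k : Fin (I+1) → ℕ) : ℝ :=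
  termP I K k * stepsS I k * cprod I η φ k

noncomputable def W : (I : ℕ) → ℕ → ℝ → (Fin I → ℝ) → ℝ
  | 0, _, _, _ => 0
  | 1, K, _, _ => if K ≤ 1 then 1 else 0
  | (I + 2), K, η, φ =>
      cfn η (K - 1) (∑ i : Fin (I+1), φ (Fin.castAdd 1 i))
          * W (I + 1) (K - 1) η (fun i => φ (Fin.castAdd 1 i))
      + 2 * (cfn η K (∑ i : Fin (I+1), φ (Fin.castAdd 1 i))
          * W (I + 1) K η (fun i => φ (Fin.castAdd 1 i)))
      + cfn η (K + 1) (∑ i : Fin (I+1), φ (Fin.castAdd 1 i))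
          * W (I + 1) (K + 1) η (fun i => φ (Fin.castAdd 1 i))

lemma cfn_zero (η S : ℝ) : cfn η 0 S = 0 := by simp [cfn]

lemma wt_comm (a b : ℕ) : wt a b = wt b a := by
  unfold wt
  by_cases h : a = b
  · simp [h]
  · rw [if_neg h, if_neg (Ne.symm h)]
    by_cases h2 : a = b + 1 ∨ b = a + 1
    · rw [if_pos h2, if_pos (Or.symm h2)]
    · rw [if_neg h2, if_neg (fun hc => h2 (Or.symm hc))]

lemma bwt_zero_eq_wt (b : ℕ) (hb : b ≠ 0) : bwt 0 b = wt 0 b := by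
  unfold bwt wt
  rcases b with _ | b
  · omega
  · rcases b with _ | b <;> simp <;> omega

lemma key (η S t : ℝ) (K L : ℕ) :
    cfn η (K - 1) S * ((if L = K - 1 then (1:ℝ) else 0) * t)
      + 2 * (cfn η K S * ((if L = K then (1:ℝ) else 0) * t))
      + cfn η (K + 1) S * ((if L = K + 1 then (1:ℝ) else 0) * t)
    = wt L K * (cfn η L S * t) := by
  unfold wt
  rcases K with _ | K
  · rcases L with _ | L
    · simp [cfn_zero]
    · rcases L with _ | L <;> simp [cfn_zero] <;> ring
  · have hs : K + 1 - 1 = K := rfl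
    rw [hs]
    by_cases h1 : L = K
    · subst h1
      rw [if_pos rfl, if_neg (by omega), if_neg (by omega), if_neg (by omega),
        if_pos (by omega)]
      ring
    · by_cases h2 : L = K + 1
      · subst h2
        rw [if_neg (by omega), if_pos rfl, if_neg (by omega), if_pos rfl]
        ring
      · by_cases h3 : L = K + 2
        · subst h3
          rw [if_neg (by omega), if_neg (by omega), if_pos rfl, if_neg (by omega),
            if_pos (by omega)]
          ring
        · rw [if_neg (by omega), if_neg (by omega), if_neg (by omega),
            if_neg (by omega), if_neg (by omega)]
          ring

lemma psum_castSucc (n : ℕ) (φ : Fin (n+1) → ℝ) (J : ℕ) (hJ : J ≤ n) :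
    psum (n+1) φ J = psum n (fun i => φ (Fin.castAdd 1 i)) J := by
  unfold psum
  rw [Fin.sum_univ_castSucc]
  simp only [Fin.val_last, Fin.coe_castSucc]
  rw [if_neg (by omega)]
  simp [Fin.castAdd]
  rfl

lemma psum_rev (I J : ℕ) (φ : Fin I → ℝ) (hφ : ∑ i, φ i = 0) (hJ : J ≤ I) :
    psum I (fun i => -φ (Fin.rev i)) J = psum I φ (I - J) := by
  unfold psum
  have h0 := Equiv.sum_comp (Fin.revPerm (n := I))
    (fun i : Fin I => if (i : ℕ) < J then -φ (Fin.rev i) else 0)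
  simp only [Fin.revPerm_apply] at h0
  rw [← h0]
  simp only [Fin.rev_rev]
  have h1 : ∀ i : Fin I, (if ((Fin.rev i : Fin I) : ℕ) < J then -φ i else 0)
      = (if (i : ℕ) < I - J then φ i else 0) - φ i := by
    intro i
    have hi := i.isLt
    rw [Fin.val_rev]
    by_cases h : I - (i + 1) < J
    · rw [if_pos h, if_neg (by omega)]; ring
    · rw [if_neg h, if_pos (by omega)]; ring
  rw [Finset.sum_congr rfl (fun i _ => h1 i), Finset.sum_sub_distrib, hφ, sub_zero]

lemma termP_snoc (I K : ℕ) (k' : Fin (I+2) → ℕ) (m : ℕ) :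
    termP (I+2) K (Fin.snoc k' m) = (if m = K then 1 else 0) * (if k' 0 = 0 then 1 else 0) := by
  unfold termP
  have h0 : (Fin.snoc k' m : Fin (I+3) → ℕ) 0 = k' 0 := by
    have := Fin.snoc_castSucc (α := fun _ => ℕ) m k' 0
    simpa using this
  rw [h0, Fin.snoc_last]
  ring

lemma stepsW_snoc (I : ℕ) (k' : Fin (I+2) → ℕ) (m : ℕ) :
    stepsW (I+2) (Fin.snoc k' m) = stepsW (I+1) k' * wt (k' (Fin.last (I+1))) m := by
  unfold stepsW
  rw [Fin.prod_univ_castSucc]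
  congr 1
  · apply Finset.prod_congr rfl
    intro J _
    have h1 : (Fin.snoc k' m : Fin (I+3) → ℕ) J.castSucc.castSucc = k' J.castSucc :=
      Fin.snoc_castSucc (α := fun _ => ℕ) m k' J.castSucc
    have h2 : (Fin.snoc k' m : Fin (I+3) → ℕ) J.castSucc.succ = k' J.succ := by
      rw [Fin.succ_castSucc]
      exact Fin.snoc_castSucc (α := fun _ => ℕ) m k' J.succ
    rw [h1, h2]
    rfl
  · have h1 : (Fin.snoc k' m : Fin (I+3) → ℕ) (Fin.last (I+1)).castSucc
        = k' (Fin.last (I+1)) := Fin.snoc_castSucc (α := fun _ => ℕ) m k' _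
    have h2 : (Fin.snoc k' m : Fin (I+3) → ℕ) (Fin.last (I+1)).succ = m := by
      rw [Fin.succ_last, Fin.snoc_last]
    rw [h1, h2, if_neg (by simp [Fin.val_last])]

lemma cprod_snoc (I : ℕ) (η : ℝ) (φ : Fin (I+2) → ℝ) (k' : Fin (I+2) → ℕ) (m : ℕ) :
    cprod (I+2) η φ (Fin.snoc k' m)
      = cprod (I+1) η (fun i => φ (Fin.castAdd 1 i)) k'
        * cfn η (k' (Fin.last (I+1))) (psum (I+2) φ (I+1)) := by
  unfold cprod
  rw [Fin.prod_univ_castSucc (n := I+2)]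
  rw [if_neg (by simp [Fin.val_last]), mul_one]
  have hL := Fin.prod_univ_castSucc (n := I+1) (f := fun J : Fin (I+2) =>
    if 0 < ((J.castSucc : Fin (I+3)) : ℕ) ∧ ((J.castSucc : Fin (I+3)) : ℕ) < I + 2
    then cfn η ((Fin.snoc k' m : Fin (I+3) → ℕ) J.castSucc) (psum (I+2) φ ((J.castSucc : Fin (I+3)) : ℕ)) else 1)
  have hR := Fin.prod_univ_castSucc (n := I+1) (f := fun J : Fin (I+2) =>
    if 0 < (J : ℕ) ∧ (J : ℕ) < I + 1
    then cfn η (k' J) (psum (I+1) (fun i => φ (Fin.castAdd 1 i)) (J : ℕ)) else 1)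
  rw [hR, if_neg (by simp [Fin.val_last]), mul_one, hL]
  congr 1
  · apply Finset.prod_congr rfl
    intro J _
    have hv : ((J.castSucc.castSucc : Fin (I+3)) : ℕ) = (J : ℕ) := by simp
    have hk : (Fin.snoc k' m : Fin (I+3) → ℕ) J.castSucc.castSucc = k' J.castSucc :=
      Fin.snoc_castSucc (α := fun _ => ℕ) m k' J.castSucc
    rw [hv, hk]
    have hJ := J.isLt
    by_cases h : 0 < (J : ℕ)
    · rw [if_pos ⟨h, by omega⟩, if_pos (by simp only [Fin.coe_castSucc]; exact ⟨h, by omega⟩)]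
      rw [psum_castSucc (I+1) φ (J : ℕ) (by omega)]
      simp
    · rw [if_neg (by omega), if_neg (by simp; omega)]
  · have hk : (Fin.snoc k' m : Fin (I+3) → ℕ) (Fin.last (I+1)).castSucc = k' (Fin.last (I+1)) :=
      Fin.snoc_castSucc (α := fun _ => ℕ) m k' _
    rw [hk]
    rw [if_pos (by simp [Fin.val_last])]
    simp [Fin.val_last]

lemma bwt_zero (K : ℕ) : bwt 0 K = if K ≤ 1 then 1 else 0 := by
  unfold bwt
  rcases K with _ | K
  · simp
  · rcases K with _ | K
    · simp
    · rw [if_neg (by omega), if_neg (by omega)]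

lemma termW_snoc (I K : ℕ) (η : ℝ) (φ : Fin (I+2) → ℝ) (k' : Fin (I+2) → ℕ) (m : ℕ) :
    termW (I+2) K η φ (Fin.snoc k' m)
      = (if m = K then 1 else 0)
        * (wt (k' (Fin.last (I+1))) m
          * (cfn η (k' (Fin.last (I+1))) (psum (I+2) φ (I+1))
            * termW (I+1) (k' (Fin.last (I+1))) η (fun i => φ (Fin.castAdd 1 i)) k')) := by
  unfold termW
  rw [termP_snoc, stepsW_snoc, cprod_snoc]
  unfold termP
  rw [if_pos rfl]
  ring

lemma termW_top (I M : ℕ) (η : ℝ) (φ : Fin I → ℝ) (k : Fin (I+1) → ℕ) :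
    termW I M η φ k
      = (if k (Fin.last I) = M then 1 else 0) * termW I (k (Fin.last I)) η φ k := by
  unfold termW termP
  by_cases h : k (Fin.last I) = M
  · rw [if_pos h, if_pos rfl]; ring
  · rw [if_neg h]; ring

lemma pathW (N I : ℕ) : ∀ (K : ℕ) (η : ℝ) (φ : Fin (I+1) → ℝ), I + 1 + K < N →
    W (I+1) K η φ = ∑ k : Fin (I+2) → Fin N, termW (I+1) K η φ (fun j => (k j : ℕ)) := by
  induction I with
  | zero =>
    intro K η φ hN
    have hK : K < N := by omega
    have h0 : (0:ℕ) < N := by omega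
    rw [show W 1 K η φ = if K ≤ 1 then 1 else 0 from rfl]
    have he := Equiv.sum_comp (piFinTwoEquiv (fun _ : Fin 2 => Fin N)).symm
      (fun k : Fin 2 → Fin N => termW 1 K η φ (fun j => (k j : ℕ)))
    rw [← he, Fintype.sum_prod_type]
    have hterm : ∀ a b : Fin N,
        termW 1 K η φ (fun j => (((piFinTwoEquiv (fun _ : Fin 2 => Fin N)).symm (a, b)) j : ℕ))
          = (if (a : ℕ) = 0 then 1 else 0) * ((if (b : ℕ) = K then 1 else 0) * bwt (a : ℕ) (b : ℕ)) := by
      intro a b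
      unfold termW termP stepsW cprod
      beta_reduce
      have h0 : ((piFinTwoEquiv (fun _ : Fin 2 => Fin N)).symm (a, b)) 0 = a := rfl
      have h1 : ((piFinTwoEquiv (fun _ : Fin 2 => Fin N)).symm (a, b)) (Fin.last 1) = b := rfl
      rw [h0, h1]
      have h2 : ∀ J : Fin 2, (if 0 < (J : ℕ) ∧ (J : ℕ) < 1 then
          cfn η ((fun j => (((piFinTwoEquiv (fun _ : Fin 2 => Fin N)).symm (a, b)) j : ℕ)) J)
            (psum 1 φ (J : ℕ)) else 1) = 1 := by
        intro J
        rw [if_neg (by omega)]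
      rw [Finset.prod_congr rfl (fun J _ => h2 J), Finset.prod_const_one]
      rw [Fin.prod_univ_one]
      have h3 : ((0 : Fin 1) : ℕ) = 0 := rfl
      rw [if_pos h3]
      have h4 : (Fin.castSucc (0 : Fin 1)) = (0 : Fin 2) := rfl
      have h5 : (Fin.succ (0 : Fin 1)) = (Fin.last 1) := rfl
      rw [h4, h5, h0, h1]
      ring
    rw [Finset.sum_congr rfl (fun a _ => Finset.sum_congr rfl (fun b _ => hterm a b))]
    rw [Finset.sum_eq_single (⟨0, h0⟩ : Fin N)]
    · rw [if_pos rfl]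
      simp only [one_mul]
      rw [Finset.sum_eq_single (⟨K, hK⟩ : Fin N)]
      · rw [if_pos rfl, one_mul, bwt_zero]
      · intro b _ hb
        rw [if_neg (fun hc => hb (Fin.ext hc)), zero_mul]
      · intro h; exact absurd (Finset.mem_univ _) h
    · intro a _ ha
      rw [if_neg (fun hc => ha (Fin.ext hc))]
      simp
    · intro h; exact absurd (Finset.mem_univ _) h
  | succ I ih =>
    intro K η φ hN
    have hK : K < N := by omega
    -- decompose the sum via snoc
    have he := Equiv.sum_comp (Fin.snocEquiv (fun _ : Fin (I+3) => Fin N))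
      (fun k : Fin (I+3) → Fin N => termW (I+2) K η φ (fun j => (k j : ℕ)))
    rw [← he, Fintype.sum_prod_type]
    have hterm : ∀ (m : Fin N) (k' : Fin (I+2) → Fin N),
        termW (I+2) K η φ (fun j => ((Fin.snocEquiv (fun _ : Fin (I+3) => Fin N) (m, k')) j : ℕ))
          = (if (m : ℕ) = K then 1 else 0)
            * (wt ((k' (Fin.last (I+1))) : ℕ) (m : ℕ)
              * (cfn η ((k' (Fin.last (I+1))) : ℕ) (psum (I+2) φ (I+1))
                * termW (I+1) ((k' (Fin.last (I+1))) : ℕ) η (fun i => φ (Fin.castAdd 1 i))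
                  (fun j => (k' j : ℕ)))) := by
      intro m k'
      have hsnoc : (fun j => ((Fin.snocEquiv (fun _ : Fin (I+3) => Fin N) (m, k')) j : ℕ))
          = Fin.snoc (fun j => (k' j : ℕ)) (m : ℕ) := by
        funext j
        show ((Fin.snoc k' m : Fin (I+3) → Fin N) j : ℕ)
          = (Fin.snoc (fun j => (k' j : ℕ)) (m : ℕ) : Fin (I+3) → ℕ) j
        exact congrFun (Fin.comp_snoc (fun x : Fin N => (x : ℕ)) k' m) j
      rw [hsnoc, termW_snoc]
    rw [Finset.sum_congr rfl (fun m _ => Finset.sum_congr rfl (fun k' _ => hterm m k'))]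
    rw [Finset.sum_eq_single (⟨K, hK⟩ : Fin N)]
    · rw [if_pos rfl]
      simp only [one_mul]
      have hS : psum (I+2) φ (I+1) = ∑ i : Fin (I+1), φ (Fin.castAdd 1 i) := by
        rw [psum_castSucc (I+1) φ (I+1) (le_refl _)]
        unfold psum
        apply Finset.sum_congr rfl
        intro i _
        rw [if_pos i.isLt]
      have hW : W (I+2) K η φ
          = cfn η (K - 1) (∑ i : Fin (I+1), φ (Fin.castAdd 1 i))
              * W (I + 1) (K - 1) η (fun i => φ (Fin.castAdd 1 i))
            + 2 * (cfn η K (∑ i : Fin (I+1), φ (Fin.castAdd 1 i))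
              * W (I + 1) K η (fun i => φ (Fin.castAdd 1 i)))
            + cfn η (K + 1) (∑ i : Fin (I+1), φ (Fin.castAdd 1 i))
              * W (I + 1) (K + 1) η (fun i => φ (Fin.castAdd 1 i)) := rfl
      rw [hW, ← hS]
      rw [ih (K-1) η (fun i => φ (Fin.castAdd 1 i)) (by omega),
        ih K η (fun i => φ (Fin.castAdd 1 i)) (by omega),
        ih (K+1) η (fun i => φ (Fin.castAdd 1 i)) (by omega)]
      simp only [Finset.mul_sum]
      rw [← Finset.sum_add_distrib, ← Finset.sum_add_distrib]
      apply Finset.sum_congr rfl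
      intro k' _
      have ht1 := termW_top (I+1) (K-1) η (fun i => φ (Fin.castAdd 1 i)) (fun j => (k' j : ℕ))
      have ht2 := termW_top (I+1) K η (fun i => φ (Fin.castAdd 1 i)) (fun j => (k' j : ℕ))
      have ht3 := termW_top (I+1) (K+1) η (fun i => φ (Fin.castAdd 1 i)) (fun j => (k' j : ℕ))
      beta_reduce at ht1 ht2 ht3 ⊢
      rw [ht1, ht2, ht3]
      rw [show (2:ℝ) * (cfn η K (psum (I+2) φ (I+1)) * ((if (k' (Fin.last (I+1)) : ℕ) = K then (1:ℝ) else 0) * termW (I+1) ((k' (Fin.last (I+1)) : ℕ)) η (fun i => φ (Fin.castAdd 1 i)) (fun j => (k' j : ℕ)))) = 2 * (cfn η K (psum (I+2) φ (I+1)) * ((if (k' (Fin.last (I+1)) : ℕ) = K then (1:ℝ) else 0) * termW (I+1) ((k' (Fin.last (I+1)) : ℕ)) η (fun i => φ (Fin.castAdd 1 i)) (fun j => (k' j : ℕ)))) from rfl]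
      exact key η (psum (I+2) φ (I+1))
        (termW (I+1) ((k' (Fin.last (I+1)) : ℕ)) η (fun i => φ (Fin.castAdd 1 i)) (fun j => (k' j : ℕ)))
        K ((k' (Fin.last (I+1)) : ℕ))
    · intro m _ hm
      rw [if_neg (fun hc => hm (Fin.ext hc))]
      simp
    · intro h; exact absurd (Finset.mem_univ _) h

lemma rev_castSucc' {n : ℕ} (i : Fin n) : Fin.rev i.castSucc = (Fin.rev i).succ := by
  apply Fin.ext; rw [Fin.val_rev, Fin.val_succ, Fin.val_rev, Fin.coe_castSucc]; omega

lemma rev_succ' {n : ℕ} (i : Fin n) : Fin.rev i.succ = (Fin.rev i).castSucc := by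
  apply Fin.ext; rw [Fin.val_rev, Fin.coe_castSucc, Fin.val_rev, Fin.val_succ]; omega

lemma termW_eq_termS (I K : ℕ) (η : ℝ) (φ : Fin (I+2) → ℝ) (k : Fin (I+3) → ℕ) :
    termW (I+2) K η φ k = termS (I+2) K η φ k := by
  unfold termW termS
  by_cases h0 : k 0 = 0
  · by_cases h1 : k (⟨1, by omega⟩ : Fin (I+3)) = 0
    · have hc : cprod (I+2) η φ k = 0 := by
        apply Finset.prod_eq_zero (Finset.mem_univ (⟨1, by omega⟩ : Fin (I+3)))
        rw [if_pos (by constructor <;> simp), h1, cfn_zero]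
      rw [hc, mul_zero, mul_zero]
    · have hsteps : stepsW (I+2) k = stepsS (I+2) k := by
        unfold stepsW stepsS
        apply Finset.prod_congr rfl
        intro J _
        by_cases hJ : (J : ℕ) = 0
        · have hJ0 : J = 0 := Fin.ext hJ
          subst hJ0
          rw [if_pos hJ]
          have hcs : (Fin.castSucc (0 : Fin (I+2))) = (0 : Fin (I+3)) := rfl
          have hsu : (Fin.succ (0 : Fin (I+2))) = (⟨1, by omega⟩ : Fin (I+3)) := rfl
          rw [hcs, hsu, h0]
          exact bwt_zero_eq_wt _ h1
        · rw [if_neg hJ]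
      rw [hsteps]
  · unfold termP
    rw [if_neg h0]
    ring

lemma termS_rev (I : ℕ) (η : ℝ) (φ : Fin I → ℝ) (hφ : ∑ i, φ i = 0) (k : Fin (I+1) → ℕ) :
    termS I 0 η (fun i => -φ (Fin.rev i)) (fun j => k (Fin.rev j)) = termS I 0 η φ k := by
  unfold termS
  have hP : termP I 0 (fun j => k (Fin.rev j)) = termP I 0 k := by
    unfold termP
    beta_reduce
    rw [show Fin.rev (0 : Fin (I+1)) = Fin.last I by simp,
      show Fin.rev (Fin.last I) = (0 : Fin (I+1)) by simp]
    ring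
  have hS : stepsS I (fun j => k (Fin.rev j)) = stepsS I k := by
    unfold stepsS
    beta_reduce
    have h : ∀ J : Fin I, wt (k (Fin.rev J.castSucc)) (k (Fin.rev J.succ))
        = (fun J' : Fin I => wt (k J'.castSucc) (k J'.succ)) (Fin.rev J) := by
      intro J
      rw [rev_castSucc', rev_succ']
      exact wt_comm _ _
    rw [Finset.prod_congr rfl (fun J _ => h J)]
    exact Equiv.prod_comp Fin.revPerm (fun J' : Fin I => wt (k J'.castSucc) (k J'.succ))
  have hC : cprod I η (fun i => -φ (Fin.rev i)) (fun j => k (Fin.rev j)) = cprod I η φ k := by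
    unfold cprod
    beta_reduce
    have he := Equiv.prod_comp (Fin.revPerm (n := I+1)) (fun J : Fin (I+1) =>
      if 0 < (J : ℕ) ∧ (J : ℕ) < I then cfn η (k (Fin.rev J)) (psum I (fun i => -φ (Fin.rev i)) (J : ℕ)) else 1)
    simp only [Fin.revPerm_apply] at he
    rw [← he]
    apply Finset.prod_congr rfl
    intro J _
    have hJ := J.isLt
    have hv : ((Fin.rev J : Fin (I+1)) : ℕ) = I - (J : ℕ) := by rw [Fin.val_rev]; omega
    rw [Fin.rev_rev, hv]
    by_cases hc : 0 < (J : ℕ) ∧ (J : ℕ) < I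
    · rw [if_pos (by omega), if_pos hc]
      rw [psum_rev I (I - (J : ℕ)) φ hφ (by omega)]
      rw [show I - (I - (J : ℕ)) = (J : ℕ) by omega]
    · rw [if_neg (by omega), if_neg hc]
  rw [hP, hS, hC]

lemma Wrev (I : ℕ) (η : ℝ) (φ : Fin (I+2) → ℝ) (hφ : ∑ i, φ i = 0) :
    W (I+2) 0 η φ = W (I+2) 0 η (fun i => -φ (Fin.rev i)) := by
  rw [pathW (I+3) (I+1) 0 η φ (by omega),
    pathW (I+3) (I+1) 0 η (fun i => -φ (Fin.rev i)) (by omega)]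
  have he := Equiv.sum_comp (Equiv.arrowCongr (Fin.revPerm (n := I+3)) (Equiv.refl (Fin (I+3))))
    (fun k : Fin (I+3) → Fin (I+3) => termS (I+2) 0 η (fun i => -φ (Fin.rev i)) (fun j => (k j : ℕ)))
  rw [Finset.sum_congr rfl (fun k _ => termW_eq_termS I 0 η φ (fun j => (k j : ℕ)))]
  conv_rhs => rw [Finset.sum_congr rfl (fun k _ =>
      termW_eq_termS I 0 η (fun i => -φ (Fin.rev i)) (fun j => (k j : ℕ)))]
  rw [← he]
  apply Finset.sum_congr rfl
  intro k _
  have hek : ∀ j, (Equiv.arrowCongr (Fin.revPerm (n := I+3)) (Equiv.refl (Fin (I+3)))) k j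
      = k (Fin.rev j) := by
    intro j
    simp [Equiv.arrowCongr]
  have h2 := termS_rev (I+2) η φ hφ (fun j => (k j : ℕ))
  beta_reduce at h2
  rw [show (fun j => (((Equiv.arrowCongr (Fin.revPerm (n := I+3)) (Equiv.refl (Fin (I+3)))) k) j : ℕ))
      = (fun j => (k (Fin.rev j) : ℕ)) from funext (fun j => by rw [hek]), ← h2]

noncomputable def extP {n : ℕ} (τ : Equiv.Perm (Fin n)) : Equiv.Perm (Fin (n+1)) :=
  (finSuccEquivLast.symm).permCongr τ.optionCongr

lemma extP_castAdd {n : ℕ} (τ : Equiv.Perm (Fin n)) (i : Fin n) :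
    extP τ (Fin.castAdd 1 i) = Fin.castAdd 1 (τ i) := by
  show extP τ (Fin.castSucc i) = Fin.castSucc (τ i)
  unfold extP
  simp [Equiv.permCongr_apply]

lemma resym (n : ℕ) (G : (Fin (n+1) → ℝ) → ℝ) (φ : Fin (n+2) → ℝ) (τ : Equiv.Perm (Fin (n+1))) :
    ∑ σ : Equiv.Perm (Fin (n+2)), G (fun i => φ (σ (Fin.castAdd 1 (τ i))))
      = ∑ σ : Equiv.Perm (Fin (n+2)), G (fun i => φ (σ (Fin.castAdd 1 i))) := by
  have hs := Equiv.sum_comp (Equiv.mulRight (extP τ))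
    (fun σ : Equiv.Perm (Fin (n+2)) => G (fun i => φ (σ (Fin.castAdd 1 i))))
  rw [← hs]
  apply Finset.sum_congr rfl
  intro σ _
  beta_reduce
  congr 1
  funext i
  rw [Equiv.coe_mulRight, Equiv.Perm.mul_apply, extP_castAdd]

lemma symone (I K : ℕ) (η : ℝ) (φ : Fin (I+2) → ℝ)
    (IH : ∀ (K' : ℕ) (ψ : Fin (I+1) → ℝ), Fk (I+1) K' η ψ
      = (((I+1).factorial : ℝ))⁻¹ * ∑ τ : Equiv.Perm (Fin (I+1)), W (I+1) K' η (fun i => ψ (τ i))) :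
    symProd (I+1) 1 (fun η' ψ => (K : ℝ) / ((K : ℝ) * η' - ∑ i, ψ i) * Fk (I+1) K η' ψ)
        (fun _ _ => 1) η φ
      = (((I+2).factorial : ℝ))⁻¹ * ∑ σ : Equiv.Perm (Fin (I+2)),
          cfn η K (∑ i : Fin (I+1), φ (σ (Fin.castAdd 1 i)))
            * W (I+1) K η (fun i => φ (σ (Fin.castAdd 1 i))) := by
  unfold symProd
  congr 1
  have h1 : ∀ σ : Equiv.Perm (Fin (I+1+1)),
      (K : ℝ) / ((K : ℝ) * η - ∑ i, (fun i => φ (σ (Fin.castAdd 1 i))) i)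
          * Fk (I+1) K η (fun i => φ (σ (Fin.castAdd 1 i))) * (fun _ _ => (1:ℝ)) η (fun j => φ (σ (Fin.natAdd (I+1) j)))
        = (((I+1).factorial : ℝ))⁻¹ * ∑ τ : Equiv.Perm (Fin (I+1)),
            cfn η K (∑ i : Fin (I+1), φ (σ (Fin.castAdd 1 (τ i))))
              * W (I+1) K η (fun i => φ (σ (Fin.castAdd 1 (τ i)))) := by
    intro σ
    rw [IH K (fun i => φ (σ (Fin.castAdd 1 i)))]
    beta_reduce
    rw [mul_one, Finset.mul_sum, Finset.mul_sum, Finset.mul_sum]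
    apply Finset.sum_congr rfl
    intro τ _
    have hsum : (∑ i : Fin (I+1), φ (σ (Fin.castAdd 1 i)))
        = ∑ i : Fin (I+1), φ (σ (Fin.castAdd 1 (τ i))) :=
      (Equiv.sum_comp τ (fun i => φ (σ (Fin.castAdd 1 i)))).symm
    show (K : ℝ) / ((K : ℝ) * η - (∑ i : Fin (I+1), φ (σ (Fin.castAdd 1 i))))
        * ((((I+1).factorial : ℝ))⁻¹ * W (I+1) K η (fun i => φ (σ (Fin.castAdd 1 (τ i)))))
      = (((I+1).factorial : ℝ))⁻¹ * (cfn η K (∑ i : Fin (I+1), φ (σ (Fin.castAdd 1 (τ i))))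
          * W (I+1) K η (fun i => φ (σ (Fin.castAdd 1 (τ i)))))
    rw [← hsum]
    unfold cfn
    ring
  rw [Finset.sum_congr rfl (fun σ _ => h1 σ)]
  rw [← Finset.mul_sum]
  rw [Finset.sum_comm]
  have h2 : ∀ τ : Equiv.Perm (Fin (I+1)),
      (∑ σ : Equiv.Perm (Fin (I+2)), cfn η K (∑ i : Fin (I+1), φ (σ (Fin.castAdd 1 (τ i))))
        * W (I+1) K η (fun i => φ (σ (Fin.castAdd 1 (τ i)))))
      = ∑ σ : Equiv.Perm (Fin (I+2)), cfn η K (∑ i : Fin (I+1), φ (σ (Fin.castAdd 1 i)))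
        * W (I+1) K η (fun i => φ (σ (Fin.castAdd 1 i))) := by
    intro τ
    exact resym I (fun ψ => cfn η K (∑ i, ψ i) * W (I+1) K η ψ) φ τ
  rw [Finset.sum_congr rfl (fun τ _ => h2 τ)]
  rw [Finset.sum_const, Finset.card_univ]
  rw [nsmul_eq_mul]
  rw [← mul_assoc]
  have : (((I+1).factorial : ℝ))⁻¹ * ((Fintype.card (Equiv.Perm (Fin (I+1)))) : ℝ) = 1 := by
    rw [Fintype.card_perm, Fintype.card_fin]
    rw [inv_mul_cancel₀]
    exact_mod_cast Nat.factorial_ne_zero (I+1)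
  rw [this, one_mul]

lemma claimA : ∀ (I : ℕ) (K : ℕ) (η : ℝ) (φ : Fin I → ℝ),
    Fk I K η φ = ((I.factorial : ℝ))⁻¹ * ∑ σ : Equiv.Perm (Fin I), W I K η (fun i => φ (σ i)) := by
  intro I
  induction I using Nat.strong_induction_on with
  | _ I ih =>
    intro K η φ
    match I, φ, ih with
    | 0, φ, _ =>
      have h : ∀ σ : Equiv.Perm (Fin 0), W 0 K η (fun i => φ (σ i)) = 0 := fun _ => rfl
      rw [show Fk 0 K η φ = 0 from rfl, Finset.sum_congr rfl (fun σ _ => h σ)]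
      simp
    | 1, φ, _ =>
      have h : ∀ σ : Equiv.Perm (Fin 1), W 1 K η (fun i => φ (σ i))
          = if K ≤ 1 then 1 else 0 := fun _ => rfl
      rw [show Fk 1 K η φ = if K ≤ 1 then 1 else 0 from rfl,
        Finset.sum_congr rfl (fun σ _ => h σ), Finset.sum_const, Finset.card_univ]
      simp
    | (n+2), φ, ih =>
      have IH : ∀ (K' : ℕ) (ψ : Fin (n+1) → ℝ), Fk (n+1) K' η ψ
          = (((n+1).factorial : ℝ))⁻¹ * ∑ τ : Equiv.Perm (Fin (n+1)), W (n+1) K' η (fun i => ψ (τ i)) :=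
        fun K' ψ => ih (n+1) (by omega) K' η ψ
      have e1 : Fk (n+2) K η φ
          = symProd (n + 1) 1
              (fun η' ψ => ((K - 1 : ℕ) : ℝ) / (((K - 1 : ℕ) : ℝ) * η' - ∑ i, ψ i)
                * Fk (n + 1) (K - 1) η' ψ) (fun _ _ => 1) η φ
            + 2 * symProd (n + 1) 1
              (fun η' ψ => (K : ℝ) / ((K : ℝ) * η' - ∑ i, ψ i)
                * Fk (n + 1) K η' ψ) (fun _ _ => 1) η φ
            + symProd (n + 1) 1
              (fun η' ψ => ((K + 1 : ℕ) : ℝ) / (((K + 1 : ℕ) : ℝ) * η' - ∑ i, ψ i)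
                * Fk (n + 1) (K + 1) η' ψ) (fun _ _ => 1) η φ := rfl
      rw [e1, symone n (K-1) η φ IH, symone n K η φ IH, symone n (K+1) η φ IH]
      have hW : ∀ σ : Equiv.Perm (Fin (n+2)), W (n+2) K η (fun i => φ (σ i))
          = cfn η (K - 1) (∑ i : Fin (n+1), φ (σ (Fin.castAdd 1 i)))
              * W (n + 1) (K - 1) η (fun i => φ (σ (Fin.castAdd 1 i)))
            + 2 * (cfn η K (∑ i : Fin (n+1), φ (σ (Fin.castAdd 1 i)))
              * W (n + 1) K η (fun i => φ (σ (Fin.castAdd 1 i))))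
            + cfn η (K + 1) (∑ i : Fin (n+1), φ (σ (Fin.castAdd 1 i)))
              * W (n + 1) (K + 1) η (fun i => φ (σ (Fin.castAdd 1 i))) := fun σ => rfl
      conv_rhs => rw [Finset.sum_congr rfl (fun σ _ => hW σ)]
      rw [Finset.sum_add_distrib, Finset.sum_add_distrib]
      rw [show (∑ σ : Equiv.Perm (Fin (n+2)), 2 * (cfn η K (∑ i : Fin (n+1), φ (σ (Fin.castAdd 1 i)))
              * W (n + 1) K η (fun i => φ (σ (Fin.castAdd 1 i)))))
          = 2 * ∑ σ : Equiv.Perm (Fin (n+2)), (cfn η K (∑ i : Fin (n+1), φ (σ (Fin.castAdd 1 i)))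
              * W (n + 1) K η (fun i => φ (σ (Fin.castAdd 1 i)))) from (Finset.mul_sum _ _ _).symm]
      ring

/-- Lemma 5.1(ii): if `φ₁ + ⋯ + φ_I = 0`, then
`F_{I,0}(η; φ₁,…,φ_I) = F_{I,0}(η; −φ₁,…,−φ_I)` at all points where both sides are
finite (away from the resonance hyperplanes). -/
theorem stmt12 (I : ℕ) (η : ℝ) (φ : Fin I → ℝ)
    (hφ : ∑ i, φ i = 0)
    (hreg : ∀ m : ℕ, 0 < m → m ≤ I → ∀ s : Finset (Fin I),
      (m : ℝ) * η - ∑ i ∈ s, φ i ≠ 0 ∧ (m : ℝ) * η + ∑ i ∈ s, φ i ≠ 0) :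
    Fk I 0 η φ = Fk I 0 η (fun i => -φ i) := by
  clear hreg
  rcases I with _ | _ | n
  · rfl
  · rfl
  · rw [claimA (n+2) 0 η φ, claimA (n+2) 0 η (fun i => -φ i)]
    congr 1
    have h2 := Equiv.sum_comp (Equiv.mulRight (Fin.revPerm (n := n+2)))
      (fun σ : Equiv.Perm (Fin (n+2)) => W (n+2) 0 η (fun i => -φ (σ i)))
    rw [← h2]
    apply Finset.sum_congr rfl
    intro σ _
    have hσ : ∑ i, φ (σ i) = 0 := by rw [Equiv.sum_comp σ φ]; exact hφ
    have h1 := Wrev n η (fun i => φ (σ i)) hσ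
    beta_reduce at h1 ⊢
    rw [h1]
    congr 1
end

section
/- Let k ∈ ℤ, φ ∈ ℝ, not both zero, and η ∈ ℝ with kη ≠ φ. Let θ: (0,∞) → ℝ be C¹ and let Γ: (0,∞) → ℂ be C¹ with (d/dx)(e^{iφx}Γ(x)) ∈ L¹(0,∞) and lim_{x→∞} Γ(x) = 0. Then lim_{M→∞} ∫₀^M [f Γ(x) e^{ki[ηx+2θ(x)]} − g Γ(x) e^{ki[ηx+2θ(x)]} θ'(x)] dx exists (is finite), where f is any constant and g = −2kf/(kη − φ). -/
open Set Filter Topology MeasureTheory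

/-- Lemma 4.1(ii): for `k ∈ ℤ`, `φ ∈ ℝ` not both zero and `kη ≠ φ`, if `θ` is `C¹` and
`Γ` is `C¹` with `(d/dx)(e^{iφx}Γ) ∈ L¹(0,∞)` and `Γ(x) → 0` as `x → ∞`, then
`lim_{M→∞} ∫₀^M [f Γ e^{ki[ηx+2θ]} − g Γ e^{ki[ηx+2θ]} θ'] dx` exists, where
`g = −2kf/(kη − φ)`. -/
theorem stmt14 (k : ℤ) (φ η : ℝ) (hk0 : ¬(k = 0 ∧ φ = 0)) (hkφ : (k : ℝ) * η ≠ φ)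
    (θ θ' : ℝ → ℝ)
    (hθ : ∀ x ∈ Ioi (0:ℝ), HasDerivAt θ (θ' x) x)
    (hθ' : ContinuousOn θ' (Ioi 0))
    (Γ G : ℝ → ℂ)
    (hΓ : ∀ x ∈ Ioi (0:ℝ),
      HasDerivAt (fun t : ℝ => Complex.exp (Complex.I * (φ * t : ℝ)) * Γ t) (G x) x)
    (hGcont : ContinuousOn G (Ioi 0))
    (hGint : IntegrableOn G (Ioi 0))
    (hΓ0 : Tendsto Γ atTop (𝓝 0))
    (f : ℂ) :
    ∃ L : ℂ, Tendsto
        (fun M : ℝ => ∫ x in (0:ℝ)..M,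
          (f * Γ x * Complex.exp ((k : ℂ) * Complex.I * ((η * x + 2 * θ x : ℝ) : ℂ))
            - (-(2 * (k : ℂ) * f) / (((k : ℝ) * η - φ : ℝ) : ℂ)) * Γ x
              * Complex.exp ((k : ℂ) * Complex.I * ((η * x + 2 * θ x : ℝ) : ℂ)) * (θ' x : ℂ)))
        atTop (𝓝 L) := by
  classical
  set c : ℝ := (k : ℝ) * η - φ with hc_def
  have hc : c ≠ 0 := sub_ne_zero.mpr hkφ
  have hcC : (c : ℂ) ≠ 0 := by exact_mod_cast hc
  set P : ℝ → ℂ := fun x =>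
    f * Γ x * Complex.exp ((k : ℂ) * Complex.I * ((η * x + 2 * θ x : ℝ) : ℂ))
      - (-(2 * (k : ℂ) * f) / ((c : ℝ) : ℂ)) * Γ x
        * Complex.exp ((k : ℂ) * Complex.I * ((η * x + 2 * θ x : ℝ) : ℂ)) * (θ' x : ℂ)
    with hP_def
  show ∃ L : ℂ, Tendsto (fun M : ℝ => ∫ x in (0:ℝ)..M, P x) atTop (𝓝 L)
  set h : ℂ := -Complex.I * f / (c : ℂ) with hh_def
  set γ : ℝ → ℂ := fun t : ℝ => Complex.exp (Complex.I * (φ * t : ℝ)) * Γ t with hγ_def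
  set u : ℝ → ℝ := fun x => c * x + 2 * (k : ℝ) * θ x with hu_def
  set E : ℝ → ℂ := fun x => Complex.exp (Complex.I * ((u x : ℝ) : ℂ)) with hE_def
  set D : ℝ → ℂ := fun x =>
    h * (G x * E x + γ x * (E x * (Complex.I * ((c + 2 * (k : ℝ) * θ' x : ℝ) : ℂ)))) with hD_def
  set F : ℝ → ℂ := fun x => h * (γ x * E x) with hF_def
  -- derivative facts
  have hu' : ∀ x ∈ Ioi (0:ℝ), HasDerivAt u (c + 2 * (k : ℝ) * θ' x) x := by
    intro x hx
    have h1 : HasDerivAt (fun y : ℝ => c * y) c x := by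
      simpa using (hasDerivAt_id x).const_mul c
    exact h1.add ((hθ x hx).const_mul (2 * (k : ℝ)))
  have hE' : ∀ x ∈ Ioi (0:ℝ),
      HasDerivAt E (E x * (Complex.I * ((c + 2 * (k : ℝ) * θ' x : ℝ) : ℂ))) x := by
    intro x hx
    have h2 : HasDerivAt (fun y : ℝ => ((u y : ℝ) : ℂ)) ((c + 2 * (k : ℝ) * θ' x : ℝ) : ℂ) x :=
      (hu' x hx).ofReal_comp
    have := (h2.const_mul Complex.I).cexp
    simpa [hE_def, mul_comm, mul_left_comm] using this
  have hF' : ∀ x ∈ Ioi (0:ℝ), HasDerivAt F (D x) x := by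
    intro x hx
    exact ((hΓ x hx).mul (hE' x hx)).const_mul h
  -- key pointwise identity
  have key : ∀ x ∈ Ioi (0:ℝ), P x = D x - h * (G x * E x) := by
    intro x hx
    have hexp : Complex.exp (Complex.I * ((φ * x : ℝ) : ℂ)) *
        Complex.exp (Complex.I * ((u x : ℝ) : ℂ))
        = Complex.exp ((k : ℂ) * Complex.I * ((η * x + 2 * θ x : ℝ) : ℂ)) := by
      rw [← Complex.exp_add]
      congr 1
      simp only [hu_def, hc_def]
      push_cast
      ring
    simp only [hP_def, hD_def, hγ_def, hE_def, hh_def]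
    rw [← hexp]
    push_cast
    field_simp
    ring_nf
    simp only [Complex.I_sq]
    ring
  -- continuity facts
  have hγc : ContinuousOn γ (Ioi 0) := fun x hx => (hΓ x hx).continuousAt.continuousWithinAt
  have hΓc : ContinuousOn Γ (Ioi 0) := by
    have : ContinuousOn (fun x : ℝ => (Complex.exp (Complex.I * ((φ * x : ℝ) : ℂ)))⁻¹ * γ x)
        (Ioi 0) := by
      refine ContinuousOn.mul (ContinuousOn.inv₀ ?_ fun x _ => Complex.exp_ne_zero _) hγc
      exact (Complex.continuous_exp.comp
        (continuous_const.mul (Complex.continuous_ofReal.comp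
          (continuous_const.mul continuous_id)))).continuousOn
    refine this.congr fun x hx => ?_
    simp only [hγ_def]
    rw [← mul_assoc, inv_mul_cancel₀ (Complex.exp_ne_zero _), one_mul]
  have hθc : ContinuousOn θ (Ioi 0) := fun x hx => (hθ x hx).continuousAt.continuousWithinAt
  have huc : ContinuousOn u (Ioi 0) :=
    (continuousOn_const.mul continuousOn_id).add (continuousOn_const.mul hθc)
  have hEc : ContinuousOn E (Ioi 0) :=
    Complex.continuous_exp.comp_continuousOn
      (continuousOn_const.mul (Complex.continuous_ofReal.comp_continuousOn huc))
  have hEkc : ContinuousOn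
      (fun x : ℝ => Complex.exp ((k : ℂ) * Complex.I * ((η * x + 2 * θ x : ℝ) : ℂ))) (Ioi 0) :=
    Complex.continuous_exp.comp_continuousOn
      (continuousOn_const.mul (Complex.continuous_ofReal.comp_continuousOn
        ((continuousOn_const.mul continuousOn_id).add (continuousOn_const.mul hθc))))
  have hPc : ContinuousOn P (Ioi 0) := by
    refine ContinuousOn.sub ((continuousOn_const.mul hΓc).mul hEkc) ?_
    exact ((continuousOn_const.mul hΓc).mul hEkc).mul
      (Complex.continuous_ofReal.comp_continuousOn hθ')
  have hDc : ContinuousOn D (Ioi 0) := by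
    refine continuousOn_const.mul (ContinuousOn.add (hGcont.mul hEc) (hγc.mul ?_))
    refine hEc.mul (continuousOn_const.mul (Complex.continuous_ofReal.comp_continuousOn ?_))
    exact continuousOn_const.add (continuousOn_const.mul hθ')
  have hGEc : ContinuousOn (fun x => h * (G x * E x)) (Ioi 0) :=
    continuousOn_const.mul (hGcont.mul hEc)
  -- norm of E is 1
  have hEnorm : ∀ x : ℝ, ‖E x‖ = 1 := by
    intro x
    simp [hE_def, Complex.norm_exp]
  by_cases hI : IntervalIntegrable P volume 0 1
  · -- main case
    have hsub : ∀ M : ℝ, 1 ≤ M → uIcc (1:ℝ) M ⊆ Ioi 0 := by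
      intro M hM x hx
      rw [uIcc_of_le hM] at hx
      exact lt_of_lt_of_le one_pos hx.1
    have hintP : ∀ M : ℝ, 1 ≤ M → IntervalIntegrable P volume 1 M := fun M hM =>
      (hPc.mono (hsub M hM)).intervalIntegrable
    -- integrability of h G E on Ioi 1
    have hsub1 : Ioi (1:ℝ) ⊆ Ioi 0 := Ioi_subset_Ioi zero_le_one
    have hGEint : IntegrableOn (fun x => h * (G x * E x)) (Ioi 1) := by
      have hGmeas : AEStronglyMeasurable G (volume.restrict (Ioi (1:ℝ))) :=
        (hGint.mono_set hsub1).aestronglyMeasurable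
      have hEmeas : AEStronglyMeasurable E (volume.restrict (Ioi (1:ℝ))) :=
        (hEc.mono hsub1).aestronglyMeasurable measurableSet_Ioi
    
      refine Integrable.mono' (((hGint.mono_set hsub1).norm).const_mul ‖h‖)
        (aestronglyMeasurable_const.mul (hGmeas.mul hEmeas)) ?_
      refine Filter.Eventually.of_forall fun x => ?_
      rw [norm_mul, norm_mul, hEnorm, mul_one]
    have hGElim : Tendsto (fun M : ℝ => ∫ x in (1:ℝ)..M, h * (G x * E x)) atTop
        (𝓝 (∫ x in Ioi (1:ℝ), h * (G x * E x))) :=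
      intervalIntegral_tendsto_integral_Ioi 1 hGEint tendsto_id
    -- F tends to 0
    have hFlim : Tendsto F atTop (𝓝 0) := by
      rw [tendsto_zero_iff_norm_tendsto_zero]
      have heq : (fun x => ‖F x‖) = fun x => ‖h‖ * ‖Γ x‖ := by
        funext x
        simp only [hF_def, hγ_def, norm_mul]
        rw [hEnorm, mul_one]
        have : ‖Complex.exp (Complex.I * ((φ * x : ℝ) : ℂ))‖ = 1 := by
          simp [Complex.norm_exp]
        rw [this, one_mul]
      rw [heq]
      have := (hΓ0.norm).const_mul ‖h‖
      simpa using this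
    -- splitting the integral
    have hsplit : ∀ᶠ M in atTop, ∫ x in (0:ℝ)..M, P x =
        (∫ x in (0:ℝ)..1, P x) + ((F M - F 1) - ∫ x in (1:ℝ)..M, h * (G x * E x)) := by
      filter_upwards [eventually_ge_atTop (1:ℝ)] with M hM
      have hIM : IntervalIntegrable P volume 1 M := hintP M hM
      rw [← intervalIntegral.integral_add_adjacent_intervals hI hIM]
      congr 1
      have hDi : IntervalIntegrable D volume 1 M :=
        (hDc.mono (hsub M hM)).intervalIntegrable
      have hGEi : IntervalIntegrable (fun x => h * (G x * E x)) volume 1 M :=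
        (hGEc.mono (hsub M hM)).intervalIntegrable
      have h1 : ∫ x in (1:ℝ)..M, P x
          = ∫ x in (1:ℝ)..M, (D x - h * (G x * E x)) :=
        intervalIntegral.integral_congr fun x hx => key x (hsub M hM hx)
      rw [h1, intervalIntegral.integral_sub hDi hGEi]
      congr 1
      exact intervalIntegral.integral_eq_sub_of_hasDerivAt
        (fun x hx => hF' x (hsub M hM hx)) hDi
    refine ⟨(∫ x in (0:ℝ)..1, P x) + ((0 - F 1) - ∫ x in Ioi (1:ℝ), h * (G x * E x)), ?_⟩
    refine Tendsto.congr' (Filter.EventuallyEq.symm hsplit) ?_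
    exact tendsto_const_nhds.add (((hFlim.sub_const (F 1)).sub hGElim))
  · -- degenerate case: not integrable near 0, all integrals are 0
    refine ⟨0, ?_⟩
    have hzero : (fun M : ℝ => ∫ x in (0:ℝ)..M, P x) =ᶠ[atTop] fun _ => (0:ℂ) := by
      filter_upwards [eventually_ge_atTop (1:ℝ)] with M hM
      refine intervalIntegral.integral_undef fun hint => hI ?_
      refine hint.mono_set ?_
      rw [uIcc_of_le zero_le_one, uIcc_of_le (zero_le_one.trans hM)]
      exact Icc_subset_Icc le_rfl hM
    exact Tendsto.congr' hzero.symm tendsto_const_nhds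
end
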